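/- arXiv:2605.17090 — 2 statements merged into one kernel-verified Lean document; each statement's English description precedes it below -/
import Mathlib

section
/- Let Y be a finite set, A a finite set, ρ : A → Δ(Y) a family of probability distributions on Y with full support, M a compact metric space, and f : M → Δ(Y) a continuous map with values bounded uniformly away from zero. Then inf over α ∈ Δ(A) and m ∈ M of the relative entropy D(ρ_α ‖ f(m)) equals 0 if and only if there exists m ∈ M with f(m) in the convex hull of {ρ(·|a) : a ∈ A}, where ρ_α(y) = Σ_a α(a) ρ(y|a). -/
open Finset

lemma gibbs_term (p q : ℝ) (hp : 0 ≤ p) (hq : 0 < q) :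
    0 ≤ p * Real.log (p / q) - p + q ∧
    (p * Real.log (p / q) - p + q = 0 → p = q) := by
  rcases eq_or_lt_of_le hp with h0 | hp'
  · constructor
    · simp [← h0]; linarith
    · simp [← h0]; intro h; linarith
  · rcases eq_or_ne p q with rfl | hne
    · simp [div_self (ne_of_gt hp')]
    · have hqp : 0 < q / p := div_pos hq hp'
      have hne' : q / p ≠ 1 := by
        intro h; exact hne ((div_eq_one_iff_eq (ne_of_gt hp')).mp h).symm
      have hlt := Real.log_lt_sub_one_of_pos hqp hne'
      have hlog : Real.log (p / q) = - Real.log (q / p) := by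
        rw [Real.log_div (ne_of_gt hp') (ne_of_gt hq),
            Real.log_div (ne_of_gt hq) (ne_of_gt hp')]; ring
      have : p * Real.log (p / q) > p - q := by
        rw [hlog]
        have := mul_lt_mul_of_pos_left hlt hp'
        have hpq : p * (q / p - 1) = q - p := by field_simp
        nlinarith
      exact ⟨by linarith, fun h => by linarith⟩

lemma gibbs_sum {Y : Type*} [Fintype Y] (p q : Y → ℝ)
    (hp : ∀ y, 0 ≤ p y) (hq : ∀ y, 0 < q y)
    (hps : ∑ y, p y = 1) (hqs : ∑ y, q y = 1) :
    0 ≤ ∑ y, p y * Real.log (p y / q y) ∧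
    (∑ y, p y * Real.log (p y / q y) = 0 → ∀ y, p y = q y) := by
  have key : ∑ y, p y * Real.log (p y / q y)
      = ∑ y, (p y * Real.log (p y / q y) - p y + q y) := by
    rw [Finset.sum_add_distrib, Finset.sum_sub_distrib, hps, hqs]; ring
  have hterm : ∀ y ∈ Finset.univ, 0 ≤ p y * Real.log (p y / q y) - p y + q y :=
    fun y _ => (gibbs_term (p y) (q y) (hp y) (hq y)).1
  constructor
  · rw [key]; exact Finset.sum_nonneg hterm
  · intro h y
    rw [key] at h
    have := (Finset.sum_eq_zero_iff_of_nonneg hterm).mp h y (Finset.mem_univ y)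
    exact (gibbs_term (p y) (q y) (hp y) (hq y)).2 this

theorem stmt_0 {Y A M : Type*} [Fintype Y] [Fintype A] [Nonempty A]
    [MetricSpace M] [CompactSpace M] [Nonempty M]
    (ρ : A → Y → ℝ)
    (hρpos : ∀ a y, 0 < ρ a y)
    (hρsum : ∀ a, ∑ y, ρ a y = 1)
    (f : M → Y → ℝ) (hf : Continuous f)
    (c : ℝ) (hc : 0 < c) (hfc : ∀ m y, c ≤ f m y)
    (hfsum : ∀ m, ∑ y, f m y = 1) :
    sInf {d : ℝ | ∃ (α : A → ℝ) (m : M),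
        (∀ a, 0 ≤ α a) ∧ (∑ a, α a = 1) ∧
        d = ∑ y, (∑ a, α a * ρ a y) *
          Real.log ((∑ a, α a * ρ a y) / f m y)} = 0
    ↔ ∃ m, f m ∈ convexHull ℝ (Set.range ρ) := by
  classical
  set S := {d : ℝ | ∃ (α : A → ℝ) (m : M),
        (∀ a, 0 ≤ α a) ∧ (∑ a, α a = 1) ∧
        d = ∑ y, (∑ a, α a * ρ a y) *
          Real.log ((∑ a, α a * ρ a y) / f m y)} with hS
  -- properties of mixture
  have hmixpos : ∀ (α : A → ℝ), (∀ a, 0 ≤ α a) → (∑ a, α a = 1) →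
      ∀ y, 0 < ∑ a, α a * ρ a y := by
    intro α hα0 hα1 y
    obtain ⟨a₀, ha₀⟩ : ∃ a, α a ≠ 0 := by
      by_contra h
      push_neg at h
      simp [h] at hα1
    refine Finset.sum_pos' (fun a _ => mul_nonneg (hα0 a) (hρpos a y).le)
      ⟨a₀, Finset.mem_univ _, mul_pos (lt_of_le_of_ne (hα0 a₀) (Ne.symm ha₀)) (hρpos a₀ y)⟩
  have hmixsum : ∀ (α : A → ℝ), (∑ a, α a = 1) → ∑ y, ∑ a, α a * ρ a y = 1 := by
    intro α hα1
    rw [Finset.sum_comm]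
    simp_rw [← Finset.mul_sum, hρsum, mul_one]
    exact hα1
  have hfpos : ∀ m y, 0 < f m y := fun m y => lt_of_lt_of_le hc (hfc m y)
  -- every element of S is nonneg
  have hSnonneg : ∀ d ∈ S, 0 ≤ d := by
    rintro d ⟨α, m, hα0, hα1, rfl⟩
    exact (gibbs_sum (fun y => ∑ a, α a * ρ a y) (f m)
      (fun y => (hmixpos α hα0 hα1 y).le) (hfpos m) (hmixsum α hα1) (hfsum m)).1
  constructor
  · -- forward
    intro h
    -- S is the image of a compact set under a continuous-on map
    set K : Set ((A → ℝ) × M) := stdSimplex ℝ A ×ˢ (Set.univ : Set M) with hK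
    set G : (A → ℝ) × M → ℝ := fun p =>
      ∑ y, (∑ a, p.1 a * ρ a y) * Real.log ((∑ a, p.1 a * ρ a y) / f p.2 y) with hG
    have hSG : S = G '' K := by
      ext d
      constructor
      · rintro ⟨α, m, hα0, hα1, rfl⟩
        exact ⟨(α, m), ⟨⟨hα0, hα1⟩, Set.mem_univ m⟩, rfl⟩
      · rintro ⟨⟨α, m⟩, ⟨⟨hα0, hα1⟩, -⟩, rfl⟩
        exact ⟨α, m, hα0, hα1, rfl⟩
    have hKcomp : IsCompact K := (isCompact_stdSimplex ℝ A).prod isCompact_univ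
    have hKne : K.Nonempty := by
      refine ⟨(fun _ => (Fintype.card A : ℝ)⁻¹, Classical.arbitrary M),
        ⟨⟨fun a => by positivity, ?_⟩, Set.mem_univ _⟩⟩
      rw [Finset.sum_const, nsmul_eq_mul]
      exact mul_inv_cancel₀ (by exact_mod_cast Fintype.card_ne_zero)
    have hGcont : ContinuousOn G K := by
      apply continuousOn_finset_sum
      intro y _
      have hu : Continuous (fun p : (A → ℝ) × M => ∑ a, p.1 a * ρ a y) :=
        continuous_finset_sum _ fun a _ =>
          ((continuous_apply a).comp continuous_fst).mul continuous_const
      have hv : Continuous (fun p : (A → ℝ) × M => f p.2 y) :=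
        ((continuous_apply y).comp hf).comp continuous_snd
      have hune : ∀ p ∈ K, (0:ℝ) < ∑ a, p.1 a * ρ a y := by
        rintro ⟨α, m⟩ ⟨⟨hα0, hα1⟩, -⟩
        exact hmixpos α hα0 hα1 y
      have hvne : ∀ p ∈ K, f p.2 y ≠ 0 := fun p _ => (hfpos p.2 y).ne'
      exact hu.continuousOn.mul
        (((hu.continuousOn.div hv.continuousOn hvne).log
          (fun p hp => (div_pos (hune p hp) (hfpos p.2 y)).ne')))
    have hScomp : IsCompact S := hSG ▸ hKcomp.image_of_continuousOn hGcont
    have hSne : S.Nonempty := hSG ▸ hKne.image G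
    have hmem : (0:ℝ) ∈ S := h ▸ hScomp.sInf_mem hSne
    obtain ⟨α, m, hα0, hα1, hd⟩ := hmem
    have heq := (gibbs_sum (fun y => ∑ a, α a * ρ a y) (f m)
      (fun y => (hmixpos α hα0 hα1 y).le) (hfpos m) (hmixsum α hα1) (hfsum m)).2 hd.symm
    refine ⟨m, ?_⟩
    rw [convexHull_range_eq_exists_affineCombination]
    have hα1' : Finset.univ.sum α = 1 := hα1
    refine ⟨Finset.univ, α, fun a _ => hα0 a, hα1', ?_⟩
    rw [Finset.affineCombination_eq_linear_combination _ _ _ hα1']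
    funext y
    rw [← heq y]
    simp [Finset.sum_apply]
  · -- reverse
    rintro ⟨m, hm⟩
    rw [convexHull_range_eq_exists_affineCombination] at hm
    obtain ⟨s, w, hw0, hw1, heq⟩ := hm
    rw [Finset.affineCombination_eq_linear_combination _ _ _ hw1] at heq
    set α : A → ℝ := fun a => if a ∈ s then w a else 0 with hαdef
    have hα0 : ∀ a, 0 ≤ α a := by
      intro a; simp only [hαdef]
      split
      · exact hw0 a ‹_›
      · exact le_rfl
    have hα1 : ∑ a, α a = 1 := by
      rw [hαdef]
      rw [Finset.sum_ite_mem, Finset.univ_inter]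
      exact hw1
    have hfm : ∀ y, ∑ a, α a * ρ a y = f m y := by
      intro y
      have h1 := congrFun heq y
      rw [Finset.sum_apply] at h1
      simp only [Pi.smul_apply, smul_eq_mul] at h1
      rw [hαdef]
      simp only [ite_mul, zero_mul]
      rw [Finset.sum_ite_mem, Finset.univ_inter]
      exact h1
    have h0mem : (0:ℝ) ∈ S := by
      refine ⟨α, m, hα0, hα1, ?_⟩
      symm
      apply Finset.sum_eq_zero
      intro y _
      rw [hfm y, div_self (hfpos m y).ne', Real.log_one, mul_zero]
    exact le_antisymm (csInf_le ⟨0, fun d hd => hSnonneg d hd⟩ h0mem)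
      (le_csInf ⟨0, h0mem⟩ hSnonneg)
end

section
/- Let δ ∈ (0,1) and let (p_t)_{t≥0} be an adapted sequence of random variables with values in (0,1], with p_0 = p⁰ > 0 deterministic. Suppose that for each t, E[log p_{t+1} − log p_t | F_t] ≥ D_t − ε, where D_t ≥ 0 is F_t-measurable and ε ≥ 0. Then (1−δ) Σ_{t=0}^∞ δ^t E[D_t] ≤ −(1−δ) log p⁰ + ε. -/
/-!
Integrating the conditional drift condition turns it into the deterministic recursion
`E[D_t] - ε ≤ a_{t+1} - a_t` for `a_t = E[log p_t] ≤ 0`. Summation by parts gives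
`∑_{t<n} δ^t (a_{t+1} - a_t) = δ^n a_n - a_0 + (1 - δ) ∑_{t<n} δ^t a_{t+1}`, and since every `a_t` is
nonpositive this is at most `-a_0 = -log p⁰`; the `ε` terms contribute `ε (1 - δ) ∑_{t<n} δ^t ≤ ε`.
-/

open MeasureTheory Filter Finset

theorem integral_le_integral_of_ae_le_condExp {Ω : Type*} {m m0 : MeasurableSpace Ω}
    {μ : Measure Ω} (hm : m ≤ m0) [SigmaFinite (μ.trim hm)] {f g : Ω → ℝ}
    (hf : Integrable f μ) (hfg : f ≤ᵐ[μ] μ[g | m]) :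
    ∫ ω, f ω ∂μ ≤ ∫ ω, g ω ∂μ :=
  integral_condExp (μ := μ) (f := g) hm ▸ integral_mono_ae hf integrable_condExp hfg

section Discounted

variable {δ : ℝ} {a : ℕ → ℝ}

theorem sum_range_pow_mul_sub_le (hδ0 : 0 ≤ δ) (hδ1 : δ ≤ 1) (ha : ∀ t, a t ≤ 0) (n : ℕ) :
    ∑ t ∈ range n, δ ^ t * (a (t + 1) - a t) ≤ δ ^ n * a n - a 0 := by
  induction n with
  | zero => simp
  | succ n ih =>
    have hpow : δ ^ n * a (n + 1) ≤ δ ^ (n + 1) * a (n + 1) :=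
      mul_le_mul_of_nonpos_right (pow_le_pow_of_le_one hδ0 hδ1 n.le_succ) (ha (n + 1))
    rw [sum_range_succ]
    linarith

theorem sum_range_pow_mul_sub_le_neg (hδ0 : 0 ≤ δ) (hδ1 : δ ≤ 1) (ha : ∀ t, a t ≤ 0) (n : ℕ) :
    ∑ t ∈ range n, δ ^ t * (a (t + 1) - a t) ≤ -a 0 := by
  have := mul_nonpos_of_nonneg_of_nonpos (pow_nonneg hδ0 n) (ha n)
  linarith [sum_range_pow_mul_sub_le hδ0 hδ1 ha n]

theorem one_sub_mul_sum_range_pow_le_one (hδ0 : 0 ≤ δ) (n : ℕ) :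
    (1 - δ) * ∑ t ∈ range n, δ ^ t ≤ 1 := by
  rw [mul_neg_geom_sum]
  linarith [pow_nonneg hδ0 n]

variable {d : ℕ → ℝ} {ε : ℝ}

theorem one_sub_mul_sum_range_pow_mul_le (hδ0 : 0 ≤ δ) (hδ1 : δ < 1) (ha : ∀ t, a t ≤ 0)
    (hε : 0 ≤ ε) (hstep : ∀ t, d t - ε ≤ a (t + 1) - a t) (n : ℕ) :
    ∑ t ∈ range n, (1 - δ) * (δ ^ t * d t) ≤ -(1 - δ) * a 0 + ε := by
  have hδ' : 0 ≤ 1 - δ := by linarith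
  calc ∑ t ∈ range n, (1 - δ) * (δ ^ t * d t)
      ≤ ∑ t ∈ range n, (1 - δ) * (δ ^ t * (a (t + 1) - a t) + ε * δ ^ t) := by
        gcongr with t
        nlinarith [hstep t, pow_nonneg hδ0 t]
    _ = (1 - δ) * ∑ t ∈ range n, δ ^ t * (a (t + 1) - a t)
          + ε * ((1 - δ) * ∑ t ∈ range n, δ ^ t) := by
        rw [← mul_sum, sum_add_distrib, ← mul_sum, mul_add]
        ring
    _ ≤ (1 - δ) * -a 0 + ε * 1 := by
        gcongr
        · exact sum_range_pow_mul_sub_le_neg hδ0 hδ1.le ha n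
        · exact one_sub_mul_sum_range_pow_le_one hδ0 n
    _ = -(1 - δ) * a 0 + ε := by ring

theorem one_sub_mul_tsum_pow_mul_le (hδ0 : 0 ≤ δ) (hδ1 : δ < 1) (ha : ∀ t, a t ≤ 0)
    (hd : ∀ t, 0 ≤ d t) (hε : 0 ≤ ε) (hstep : ∀ t, d t - ε ≤ a (t + 1) - a t) :
    (1 - δ) * ∑' t, δ ^ t * d t ≤ -(1 - δ) * a 0 + ε := by
  rw [← tsum_mul_left]
  exact Real.tsum_le_of_sum_range_le
    (fun t => mul_nonneg (by linarith) (mul_nonneg (pow_nonneg hδ0 t) (hd t)))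
    (one_sub_mul_sum_range_pow_mul_le hδ0 hδ1 ha hε hstep)

end Discounted

theorem stmt_11_general {Ω : Type*} {m0 : MeasurableSpace Ω}
    (μ : Measure Ω) [IsProbabilityMeasure μ]
    (ℱ : Filtration ℕ m0)
    (δ : ℝ) (hδ : δ ∈ Set.Ioo (0 : ℝ) 1)
    (p : ℕ → Ω → ℝ)
    (hpmem : ∀ t ω, p t ω ∈ Set.Ioc (0 : ℝ) 1)
    (p0 : ℝ) (hp0det : ∀ ω, p 0 ω = p0)
    (hlogint : ∀ t, Integrable (fun ω => Real.log (p t ω)) μ)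
    (D : ℕ → Ω → ℝ)
    (hDnn : ∀ t ω, 0 ≤ D t ω)
    (hDint : ∀ t, Integrable (D t) μ)
    (ε : ℝ) (hε : 0 ≤ ε)
    (hstep : ∀ t, ∀ᵐ ω ∂μ,
      D t ω - ε ≤
        (μ[fun ω' => Real.log (p (t + 1) ω') - Real.log (p t ω') | ℱ t]) ω) :
    (1 - δ) * ∑' t : ℕ, δ ^ t * ∫ ω, D t ω ∂μ
      ≤ -(1 - δ) * Real.log p0 + ε := by
  have hlog_nonpos (t : ℕ) : ∫ ω, Real.log (p t ω) ∂μ ≤ 0 :=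
    integral_nonpos fun ω => Real.log_nonpos (hpmem t ω).1.le (hpmem t ω).2
  have hdrift (t : ℕ) :
      ∫ ω, D t ω ∂μ - ε ≤ ∫ ω, Real.log (p (t + 1) ω) ∂μ - ∫ ω, Real.log (p t ω) ∂μ := by
    have := integral_le_integral_of_ae_le_condExp (f := fun ω => D t ω - ε) (ℱ.le t)
      ((hDint t).sub (integrable_const ε)) (hstep t)
    rwa [integral_sub (hDint t) (integrable_const ε), integral_sub (hlogint (t + 1)) (hlogint t),
      integral_const, probReal_univ, one_smul] at this
  have := one_sub_mul_tsum_pow_mul_le hδ.1.le hδ.2 hlog_nonpos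
    (fun t => integral_nonneg (hDnn t)) hε hdrift
  simpa [hp0det] using this

theorem stmt_11 {Ω : Type*} {m0 : MeasurableSpace Ω}
    (μ : Measure Ω) [IsProbabilityMeasure μ]
    (ℱ : Filtration ℕ m0)
    (δ : ℝ) (hδ : δ ∈ Set.Ioo (0 : ℝ) 1)
    (p : ℕ → Ω → ℝ)
    (hpadp : ∀ t, StronglyMeasurable[ℱ t] (p t))
    (hpmem : ∀ t ω, p t ω ∈ Set.Ioc (0 : ℝ) 1)
    (p0 : ℝ) (hp0 : 0 < p0) (hp0det : ∀ ω, p 0 ω = p0)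
    (hlogint : ∀ t, Integrable (fun ω => Real.log (p t ω)) μ)
    (D : ℕ → Ω → ℝ)
    (hDadp : ∀ t, StronglyMeasurable[ℱ t] (D t))
    (hDnn : ∀ t ω, 0 ≤ D t ω)
    (hDint : ∀ t, Integrable (D t) μ)
    (ε : ℝ) (hε : 0 ≤ ε)
    (hstep : ∀ t, ∀ᵐ ω ∂μ,
      D t ω - ε ≤
        (μ[fun ω' => Real.log (p (t + 1) ω') - Real.log (p t ω') | ℱ t]) ω) :
    (1 - δ) * ∑' t : ℕ, δ ^ t * ∫ ω, D t ω ∂μ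
      ≤ -(1 - δ) * Real.log p0 + ε :=
  stmt_11_general μ ℱ δ hδ p hpmem p0 hp0det hlogint D hDnn hDint ε hε hstep
end
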